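/- arXiv:1808.05304 — 3 statements merged into one kernel-verified Lean document; each statement's English description precedes it below -/
import Mathlib

section
/- Let p, q, u be variable exponents on ℝ^n with p ≤ u, and let δ > 0. For any sequence (g_j)_{j∈ℕ_0} of non-negative measurable functions on ℝ^n define G_k(x) := ∑_{j=0}^∞ 2^{−|k−j|δ} g_j(x) for k ∈ ℕ_0. Then ‖(G_k)_k‖_{M^{u(·)}_{p(·)}(ℓ^{q(·)})} ≤ c(δ,q) ‖(g_j)_j‖_{M^{u(·)}_{p(·)}(ℓ^{q(·)})}, where c(δ,q) = max( ∑_{j∈ℤ} 2^{−|j|δ}, ( ∑_{j∈ℤ} 2^{−|j|δ q^-} )^{1/q^-} ). -/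
open MeasureTheory ENNReal Real
open scoped FourierTransform

noncomputable section

/-- Euclidean space `ℝ^n`. -/
abbrev Rn (n : ℕ) : Type := EuclideanSpace ℝ (Fin n)

variable {n : ℕ}

/-- The function `φ_t(s)` used in the semimodular of variable exponent Lebesgue spaces:
`φ_t(s) = s^t` for `t < ∞`, while `φ_∞(s) = 0` for `s ≤ 1` and `= ∞` for `s > 1`. -/
def phiVE (t : ℝ≥0∞) (s : ℝ≥0∞) : ℝ≥0∞ :=
  if t = ∞ then (if s ≤ 1 then 0 else ∞) else s ^ t.toReal

/-- The semimodular `ρ_p` of variable exponent Lebesgue spaces. -/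
def modularVE (p : Rn n → ℝ≥0∞) (g : Rn n → ℝ≥0∞) : ℝ≥0∞ :=
  ∫⁻ x, phiVE (p x) (g x)

/-- The variable exponent Lebesgue quasi-norm `‖·‖_{L^{p(·)}(ℝ^n)}`, applied to the
(pointwise) absolute value of a function, i.e. to `[0,∞]`-valued functions.
(For `p⁻ ≥ 1` this is the usual Luxemburg norm; for general `p` it agrees with the
definition via `‖f‖ = ‖|f|^t‖_{L^{p/t}}^{1/t}`.) -/
def vLpNorm (p : Rn n → ℝ≥0∞) (g : Rn n → ℝ≥0∞) : ℝ≥0∞ :=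
  sInf {lam : ℝ≥0∞ | modularVE p (fun x => g x / lam) ≤ 1}

/-- A variable exponent: a measurable function `p : ℝ^n → (0,∞]` with `p⁻ = ess inf p > 0`. -/
def IsVarExp (p : Rn n → ℝ≥0∞) : Prop :=
  Measurable p ∧ (∀ x, 0 < p x) ∧ 0 < essInf p (volume : Measure (Rn n))

/-- Local log-Hölder continuity of `g : ℝ^n → ℝ`. -/
def LocLogHolder (g : Rn n → ℝ) : Prop :=
  ∃ c > 0, ∀ x y : Rn n, |g x - g y| ≤ c / Real.log (Real.exp 1 + (dist x y)⁻¹)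

/-- Log-Hölder decay of `g` at infinity, with limit value `gInf` and constant `c`. -/
def LogDecay (g : Rn n → ℝ) (gInf c : ℝ) : Prop :=
  ∀ x : Rn n, |g x - gInf| ≤ c / Real.log (Real.exp 1 + ‖x‖)

/-- `p ∈ P^log(ℝ^n)`, with prescribed limit value `pinvInf = 1/p_∞` of `1/p` at infinity. -/
def IsPLogWith (p : Rn n → ℝ≥0∞) (pinvInf : ℝ) : Prop :=
  IsVarExp p ∧ LocLogHolder (fun x => (p x)⁻¹.toReal) ∧
    ∃ c > 0, LogDecay (fun x => (p x)⁻¹.toReal) pinvInf c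

/-- `p ∈ P^log(ℝ^n)`. -/
def IsPLog (p : Rn n → ℝ≥0∞) : Prop := ∃ pinvInf : ℝ, IsPLogWith p pinvInf

/-- The Morrey quasi-norm `‖·‖_{M^{u(·)}_{p(·)}(ℝ^n)}` of a `[0,∞]`-valued function:
`sup_{x, r>0} r^{n(1/u(x) - 1/p(x))} ‖f‖_{L^{p(·)}(B_r(x))}`. -/
def morreyNorm (p u : Rn n → ℝ≥0∞) (g : Rn n → ℝ≥0∞) : ℝ≥0∞ :=
  ⨆ (x : Rn n) (r : ℝ) (_ : 0 < r),
    ENNReal.ofReal (r ^ ((n : ℝ) * ((u x)⁻¹.toReal - (p x)⁻¹.toReal))) *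
      vLpNorm p ((Metric.ball x r).indicator g)

/-- The `ℓ^q` (quasi-)norm of a sequence in `[0,∞]`, with the usual modification for `q = ∞`. -/
def lqNorm (q : ℝ≥0∞) (a : ℕ → ℝ≥0∞) : ℝ≥0∞ :=
  if q = ∞ then ⨆ ν, a ν else (∑' ν, a ν ^ q.toReal) ^ (1 / q.toReal)

/-- The vector-valued Morrey quasi-norm `‖(f_ν)_ν‖_{M^{u(·)}_{p(·)}(ℓ^{q(·)})}`. -/
def morreySeqNorm (p u q : Rn n → ℝ≥0∞) (f : ℕ → Rn n → ℝ≥0∞) : ℝ≥0∞ :=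
  morreyNorm p u (fun x => lqNorm (q x) (fun ν => f ν x))

/-- The kernel `η_{ν,m}(x) = 2^{νn} (1 + 2^ν |x|)^{-m}`. -/
def etaK (ν : ℕ) (m : ℝ) (x : Rn n) : ℝ≥0∞ :=
  ENNReal.ofReal ((2 : ℝ) ^ (ν * n) * (1 + 2 ^ ν * ‖x‖) ^ (-m))

/-- Convolution of `[0,∞]`-valued functions. -/
def lconv (f g : Rn n → ℝ≥0∞) (x : Rn n) : ℝ≥0∞ := ∫⁻ y, f (x - y) * g y

/-- The constant `c_{p,u} = max(0, sup_x (1/p(x) - 1/u(x)) - 1/p_∞)`. -/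
def cpu (p u : Rn n → ℝ≥0∞) (pinvInf : ℝ) : ℝ :=
  max 0 ((⨆ x : Rn n, ((p x)⁻¹.toReal - (u x)⁻¹.toReal)) - pinvInf)

/-!
The Morrey quasi-norm is monotone and positively homogeneous under a.e. pointwise domination, so
it suffices to prove, for a.e. `x`, the sequence inequality in `ℓ^{q(x)}`, where `q(x) ≥ q⁻`.
For `q(x) ≥ 1` (including `∞`) this is Schur's test: the row and column sums of the kernel
`2^{-|k-j|δ}` are at most `∑_{j∈ℤ} 2^{-|j|δ}`. For `q(x) < 1` the inequality
`(∑ b_j)^t ≤ ∑ b_j^t` reduces it to the column sums of the kernel raised to the power `q(x)`,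
which are at most `∑_{j∈ℤ} 2^{-|j|δ q⁻}` because `q(x) ≥ q⁻`.
-/

theorem ENNReal.rpow_tsum_le_tsum_rpow {ι : Type*} (a : ι → ℝ≥0∞) {t : ℝ} (ht0 : 0 < t)
    (ht1 : t ≤ 1) : (∑' i, a i) ^ t ≤ ∑' i, a i ^ t := by
  rw [ENNReal.tsum_eq_iSup_sum]
  have hmap := (ENNReal.orderIsoRpow t ht0).map_iSup (fun s : Finset ι => ∑ i ∈ s, a i)
  refine hmap.trans_le (iSup_le fun s => ?_)
  refine (Finset.le_sum_of_subadditive (· ^ t) (ENNReal.zero_rpow_of_pos ht0).le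
    (fun x y => ENNReal.rpow_add_le_add_rpow x y ht0.le ht1) s a).trans ?_
  exact ENNReal.sum_le_tsum s

theorem ENNReal.inner_le_weight_mul_Lp_tsum {ι : Type*} {p : ℝ} (hp : 1 ≤ p)
    (w f : ι → ℝ≥0∞) :
    ∑' i, w i * f i ≤ (∑' i, w i) ^ (1 - p⁻¹) * (∑' i, w i * f i ^ p) ^ p⁻¹ := by
  rw [ENNReal.tsum_eq_iSup_sum]
  refine iSup_le fun s => (ENNReal.inner_le_weight_mul_Lp_of_nonneg s hp w f).trans ?_
  have hp₁ : 0 ≤ 1 - p⁻¹ := sub_nonneg.2 (inv_le_one_of_one_le₀ hp)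
  gcongr <;> exact ENNReal.sum_le_tsum s

section Schur

variable {ι κ : Type*} (w : κ → ι → ℝ≥0∞) (a : ι → ℝ≥0∞) {T : ℝ}

theorem tsum_rpow_tsum_mul_le_of_one_le (hT : 1 ≤ T) {A B : ℝ≥0∞}
    (hrow : ∀ k, ∑' j, w k j ≤ A) (hcol : ∀ j, ∑' k, w k j ≤ B) :
    ∑' k, (∑' j, w k j * a j) ^ T ≤ A ^ (T - 1) * B * ∑' j, a j ^ T := by
  have hT₀ : 0 < T := zero_lt_one.trans_le hT
  have hrow_rpow : ∀ k, (∑' j, w k j * a j) ^ T ≤ A ^ (T - 1) * ∑' j, w k j * a j ^ T := by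
    intro k
    calc (∑' j, w k j * a j) ^ T
        ≤ ((∑' j, w k j) ^ (1 - T⁻¹) * (∑' j, w k j * a j ^ T) ^ T⁻¹) ^ T := by
          gcongr
          exact ENNReal.inner_le_weight_mul_Lp_tsum hT (w k) a
      _ = (∑' j, w k j) ^ (T - 1) * ∑' j, w k j * a j ^ T := by
          rw [ENNReal.mul_rpow_of_nonneg _ _ hT₀.le, ← ENNReal.rpow_mul, ← ENNReal.rpow_mul,
            inv_mul_cancel₀ hT₀.ne', ENNReal.rpow_one, sub_mul, one_mul,
            inv_mul_cancel₀ hT₀.ne']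
      _ ≤ A ^ (T - 1) * ∑' j, w k j * a j ^ T :=
          mul_le_mul_left (ENNReal.rpow_le_rpow (hrow k) (by linarith)) _
  calc ∑' k, (∑' j, w k j * a j) ^ T
      ≤ ∑' k, A ^ (T - 1) * ∑' j, w k j * a j ^ T := ENNReal.tsum_le_tsum hrow_rpow
    _ = A ^ (T - 1) * ∑' j, (∑' k, w k j) * a j ^ T := by
        rw [ENNReal.tsum_mul_left, ENNReal.tsum_comm]
        simp only [ENNReal.tsum_mul_right]
    _ ≤ A ^ (T - 1) * ∑' j, B * a j ^ T := by gcongr with j; exact hcol j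
    _ = A ^ (T - 1) * B * ∑' j, a j ^ T := by rw [ENNReal.tsum_mul_left, mul_assoc]

theorem tsum_rpow_tsum_mul_le_of_le_one (hT₀ : 0 < T) (hT₁ : T ≤ 1) {B : ℝ≥0∞}
    (hcol : ∀ j, ∑' k, w k j ^ T ≤ B) :
    ∑' k, (∑' j, w k j * a j) ^ T ≤ B * ∑' j, a j ^ T :=
  calc ∑' k, (∑' j, w k j * a j) ^ T
      ≤ ∑' k, ∑' j, w k j ^ T * a j ^ T := by
        gcongr with k
        refine (ENNReal.rpow_tsum_le_tsum_rpow _ hT₀ hT₁).trans_eq ?_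
        simp only [ENNReal.mul_rpow_of_nonneg _ _ hT₀.le]
    _ = ∑' j, (∑' k, w k j ^ T) * a j ^ T := by
        rw [ENNReal.tsum_comm]
        simp only [ENNReal.tsum_mul_right]
    _ ≤ ∑' j, B * a j ^ T := by gcongr with j; exact hcol j
    _ = B * ∑' j, a j ^ T := ENNReal.tsum_mul_left

end Schur

theorem lqNorm_of_ne_top {t : ℝ≥0∞} (ht : t ≠ ∞) (a : ℕ → ℝ≥0∞) :
    lqNorm t a = (∑' ν, a ν ^ t.toReal) ^ (1 / t.toReal) := if_neg ht

section lqNorm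

variable (w : ℕ → ℕ → ℝ≥0∞) (a : ℕ → ℝ≥0∞) {t : ℝ≥0∞}

theorem lqNorm_tsum_mul_le_of_one_le (ht : 1 ≤ t) {A : ℝ≥0∞}
    (hrow : ∀ k, ∑' j, w k j ≤ A) (hcol : ∀ j, ∑' k, w k j ≤ A) :
    lqNorm t (fun k => ∑' j, w k j * a j) ≤ A * lqNorm t a := by
  by_cases htop : t = ∞
  · simp only [lqNorm, htop, if_true]
    refine iSup_le fun k => ?_
    calc ∑' j, w k j * a j ≤ ∑' j, w k j * ⨆ ν, a ν := by gcongr with j; exact le_iSup a j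
      _ = (∑' j, w k j) * ⨆ ν, a ν := ENNReal.tsum_mul_right
      _ ≤ A * ⨆ ν, a ν := by gcongr; exact hrow k
  set T := t.toReal
  have hT : 1 ≤ T := by simpa using ENNReal.toReal_mono htop ht
  have hT₀ : 0 < T := zero_lt_one.trans_le hT
  rw [lqNorm_of_ne_top htop, lqNorm_of_ne_top htop]
  calc (∑' k, (∑' j, w k j * a j) ^ T) ^ (1 / T)
      ≤ (A ^ (T - 1) * A * ∑' j, a j ^ T) ^ (1 / T) := by
        gcongr
        exact tsum_rpow_tsum_mul_le_of_one_le w a hT hrow hcol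
    _ = A * (∑' j, a j ^ T) ^ (1 / T) := by
        have hApow : A ^ (T - 1) * A = A ^ T := by
          have := ENNReal.rpow_add_of_nonneg (x := A) (T - 1) 1 (by linarith) zero_le_one
          simpa using this.symm
        rw [hApow, ENNReal.mul_rpow_of_nonneg _ _ (by positivity), one_div,
          ENNReal.rpow_rpow_inv hT₀.ne']

theorem lqNorm_tsum_mul_le_of_lt_one (ht₀ : 0 < t) (ht₁ : t < 1) {B : ℝ≥0∞}
    (hcol : ∀ j, ∑' k, w k j ^ t.toReal ≤ B) :
    lqNorm t (fun k => ∑' j, w k j * a j) ≤ B ^ (1 / t.toReal) * lqNorm t a := by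
  have htop : t ≠ ∞ := ht₁.ne_top
  have hT₀ : 0 < t.toReal := ENNReal.toReal_pos ht₀.ne' htop
  have hT₁ : t.toReal ≤ 1 := by simpa using ENNReal.toReal_mono ENNReal.one_ne_top ht₁.le
  rw [lqNorm_of_ne_top htop, lqNorm_of_ne_top htop,
    ← ENNReal.mul_rpow_of_nonneg _ _ (by positivity)]
  gcongr
  exact tsum_rpow_tsum_mul_le_of_le_one w a hT₀ hT₁ hcol

end lqNorm

def geomSum (c : ℝ) : ℝ := ∑' j : ℤ, (2 : ℝ) ^ (-|(j : ℝ)| * c)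

def geomKernel (c : ℝ) (k j : ℕ) : ℝ≥0∞ :=
  ENNReal.ofReal ((2 : ℝ) ^ (-(|(k : ℤ) - (j : ℤ)| : ℝ) * c))

section geomKernel

variable {c : ℝ}

theorem summable_two_rpow_neg_abs_mul (hc : 0 < c) :
    Summable fun j : ℤ => (2 : ℝ) ^ (-|(j : ℝ)| * c) := by
  have hnat : Summable fun m : ℕ => (2 : ℝ) ^ (-(m : ℝ) * c) := by
    have hgeom : (fun m : ℕ => (2 : ℝ) ^ (-(m : ℝ) * c)) = fun m => ((2 : ℝ) ^ (-c)) ^ m := by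
      funext m
      rw [← Real.rpow_natCast, ← Real.rpow_mul zero_le_two, neg_mul, mul_comm, neg_mul]
    rw [hgeom]
    exact summable_geometric_of_lt_one (by positivity)
      (Real.rpow_lt_one_of_one_lt_of_neg one_lt_two (neg_lt_zero.mpr hc))
  refine Summable.of_nat_of_neg (hnat.congr fun m => ?_) (hnat.congr fun m => ?_) <;> simp

theorem one_le_geomSum (hc : 0 < c) : 1 ≤ geomSum c := by
  simpa [geomSum] using (summable_two_rpow_neg_abs_mul hc).le_tsum 0 fun j _ => by positivity

theorem geomSum_anti (hc : 0 < c) {c' : ℝ} (hcc' : c ≤ c') : geomSum c' ≤ geomSum c := by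
  refine (summable_two_rpow_neg_abs_mul (hc.trans_le hcc')).tsum_le_tsum (fun j => ?_)
    (summable_two_rpow_neg_abs_mul hc)
  refine Real.rpow_le_rpow_of_exponent_le one_le_two ?_
  nlinarith [abs_nonneg (j : ℝ)]

theorem geomKernel_comm (k j : ℕ) : geomKernel c k j = geomKernel c j k := by
  rw [geomKernel, geomKernel, abs_sub_comm]

theorem geomKernel_rpow (T : ℝ) (k j : ℕ) : geomKernel c k j ^ T = geomKernel (c * T) k j := by
  rw [geomKernel, geomKernel, ENNReal.ofReal_rpow_of_pos (by positivity),
    ← Real.rpow_mul zero_le_two, mul_assoc]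

theorem tsum_geomKernel_row_le (hc : 0 < c) (k : ℕ) :
    ∑' j, geomKernel c k j ≤ ENNReal.ofReal (geomSum c) := by
  have hshift : Function.Injective fun j : ℕ => (j : ℤ) - k := fun i j hij => by
    simpa using hij
  calc ∑' j, geomKernel c k j
      = ∑' j : ℕ, ENNReal.ofReal ((2 : ℝ) ^ (-|(((j : ℤ) - k : ℤ) : ℝ)| * c)) := by
        refine tsum_congr fun j => ?_
        rw [geomKernel, abs_sub_comm]
        push_cast
        rfl
    _ ≤ ∑' i : ℤ, ENNReal.ofReal ((2 : ℝ) ^ (-|(i : ℝ)| * c)) :=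
        ENNReal.tsum_comp_le_tsum_of_injective hshift
          (fun i : ℤ => ENNReal.ofReal ((2 : ℝ) ^ (-|(i : ℝ)| * c)))
    _ = ENNReal.ofReal (geomSum c) :=
        (ENNReal.ofReal_tsum_of_nonneg (fun j => by positivity)
          (summable_two_rpow_neg_abs_mul hc)).symm

theorem tsum_geomKernel_col_le (hc : 0 < c) (j : ℕ) :
    ∑' k, geomKernel c k j ≤ ENNReal.ofReal (geomSum c) := by
  simpa only [geomKernel_comm _ j] using tsum_geomKernel_row_le hc j

end geomKernel

theorem lqNorm_tsum_geomKernel_mul_le {δ : ℝ} (hδ : 0 < δ) {s t : ℝ≥0∞} (hs : 0 < s)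
    (hst : s ≤ t) (a : ℕ → ℝ≥0∞) :
    lqNorm t (fun k => ∑' j, geomKernel δ k j * a j) ≤
      ENNReal.ofReal (max (geomSum δ) (geomSum (δ * s.toReal) ^ (1 / s.toReal))) *
        lqNorm t a := by
  rcases le_or_gt 1 t with ht | ht
  · refine (lqNorm_tsum_mul_le_of_one_le _ a ht (tsum_geomKernel_row_le hδ)
      (tsum_geomKernel_col_le hδ)).trans ?_
    gcongr
    exact le_max_left _ _
  have hs₁ : s < 1 := hst.trans_lt ht
  have hsR : 0 < s.toReal := ENNReal.toReal_pos hs.ne' hs₁.ne_top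
  have hsT : s.toReal ≤ t.toReal := ENNReal.toReal_mono ht.ne_top hst
  have hS : 1 ≤ geomSum (δ * s.toReal) := one_le_geomSum (mul_pos hδ hsR)
  have hcol : ∀ j, ∑' k, geomKernel δ k j ^ t.toReal ≤
      ENNReal.ofReal (geomSum (δ * s.toReal)) := by
    intro j
    simp only [geomKernel_rpow]
    exact (tsum_geomKernel_col_le (mul_pos hδ (hsR.trans_le hsT)) j).trans
      (ENNReal.ofReal_le_ofReal (geomSum_anti (mul_pos hδ hsR) (by gcongr)))
  refine (lqNorm_tsum_mul_le_of_lt_one _ a (hs.trans_le hst) ht hcol).trans ?_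
  gcongr
  calc ENNReal.ofReal (geomSum (δ * s.toReal)) ^ (1 / t.toReal)
      ≤ ENNReal.ofReal (geomSum (δ * s.toReal)) ^ (1 / s.toReal) := by
        gcongr
        simpa using hS
    _ = ENNReal.ofReal (geomSum (δ * s.toReal) ^ (1 / s.toReal)) :=
        ENNReal.ofReal_rpow_of_pos (zero_lt_one.trans_le hS)
    _ ≤ _ := ENNReal.ofReal_le_ofReal (le_max_right _ _)

theorem phiVE_mono (t : ℝ≥0∞) : Monotone (phiVE t) := by
  intro s₁ s₂ h
  unfold phiVE
  split_ifs with ht h₁ h₂ h₂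
  · exact le_rfl
  · exact le_top
  · exact absurd (h.trans h₂) h₁
  · exact le_rfl
  · exact ENNReal.rpow_le_rpow h ENNReal.toReal_nonneg

theorem vLpNorm_mono_ae {p f g : Rn n → ℝ≥0∞} (h : ∀ᵐ x, f x ≤ g x) :
    vLpNorm p f ≤ vLpNorm p g := by
  refine sInf_le_sInf fun lam hlam => le_trans (lintegral_mono_ae ?_) hlam
  filter_upwards [h] with x hx
  exact phiVE_mono _ (ENNReal.div_le_div_right hx _)

theorem vLpNorm_const_mul_le {p f : Rn n → ℝ≥0∞} {C : ℝ≥0∞} (hC₀ : C ≠ 0) (hC : C ≠ ∞) :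
    vLpNorm p (fun x => C * f x) ≤ C * vLpNorm p f := by
  rw [← ENNReal.div_le_iff' hC₀ hC]
  refine le_sInf fun lam hlam => ?_
  rw [ENNReal.div_le_iff' hC₀ hC]
  refine sInf_le ?_
  simpa only [Set.mem_ofPred_eq, modularVE, ENNReal.mul_div_mul_left _ _ hC₀ hC] using hlam

theorem morreyNorm_le_const_mul_of_ae_le {p u f g : Rn n → ℝ≥0∞} {C : ℝ≥0∞} (hC₀ : C ≠ 0)
    (hC : C ≠ ∞) (h : ∀ᵐ x, f x ≤ C * g x) :
    morreyNorm p u f ≤ C * morreyNorm p u g := by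
  refine iSup_le fun x => iSup_le fun r => iSup_le fun hr => ?_
  have hball : vLpNorm p ((Metric.ball x r).indicator f) ≤
      C * vLpNorm p ((Metric.ball x r).indicator g) := by
    refine (vLpNorm_mono_ae ?_).trans (vLpNorm_const_mul_le hC₀ hC)
    filter_upwards [h] with y hy
    by_cases hy_mem : y ∈ Metric.ball x r <;> simp [hy_mem, hy]
  calc _ ≤ ENNReal.ofReal (r ^ ((n : ℝ) * ((u x)⁻¹.toReal - (p x)⁻¹.toReal))) *
        (C * vLpNorm p ((Metric.ball x r).indicator g)) := by gcongr
    _ = C * (ENNReal.ofReal (r ^ ((n : ℝ) * ((u x)⁻¹.toReal - (p x)⁻¹.toReal))) *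
        vLpNorm p ((Metric.ball x r).indicator g)) := mul_left_comm _ _ _
    _ ≤ C * morreyNorm p u g := by
        gcongr
        exact le_iSup₂_of_le x r (le_iSup_of_le hr le_rfl)

theorem statement6_general (n : ℕ) (p q u : Rn n → ℝ≥0∞)
    (hq : IsVarExp q)
    (delta : ℝ) (hdelta : 0 < delta)
    (g : ℕ → Rn n → ℝ≥0∞) :
    morreySeqNorm p u q
        (fun k x => ∑' j : ℕ,
          ENNReal.ofReal ((2 : ℝ) ^ (-(|(k : ℤ) - (j : ℤ)| : ℝ) * delta)) * g j x) ≤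
      ENNReal.ofReal
          (max (∑' j : ℤ, (2 : ℝ) ^ (-|(j : ℝ)| * delta))
            ((∑' j : ℤ, (2 : ℝ) ^ (-|(j : ℝ)| * delta *
                (essInf q (volume : Measure (Rn n))).toReal)) ^
              (1 / (essInf q (volume : Measure (Rn n))).toReal))) *
        morreySeqNorm p u q g := by
  set s := essInf q (volume : Measure (Rn n))
  have hconst : max (∑' j : ℤ, (2 : ℝ) ^ (-|(j : ℝ)| * delta))
      ((∑' j : ℤ, (2 : ℝ) ^ (-|(j : ℝ)| * delta * s.toReal)) ^ (1 / s.toReal)) =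
      max (geomSum delta) (geomSum (delta * s.toReal) ^ (1 / s.toReal)) := by
    simp only [geomSum, mul_assoc]
  have hC : 1 ≤ max (geomSum delta) (geomSum (delta * s.toReal) ^ (1 / s.toReal)) :=
    (one_le_geomSum hdelta).trans (le_max_left _ _)
  rw [hconst]
  refine morreyNorm_le_const_mul_of_ae_le
    (ENNReal.ofReal_pos.2 (zero_lt_one.trans_le hC)).ne' ENNReal.ofReal_ne_top ?_
  filter_upwards [(ae_essInf_le : ∀ᵐ x, s ≤ q x)] with x hx
  exact lqNorm_tsum_geomKernel_mul_le hdelta hq.2.2 hx fun j => g j x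

/-- the discrete convolution (Hardy-type) inequality in vector-valued
variable exponent Morrey spaces. -/
theorem statement6 (n : ℕ) (p q u : Rn n → ℝ≥0∞)
    (hp : IsVarExp p) (hq : IsVarExp q) (hu : IsVarExp u) (hpu : ∀ x, p x ≤ u x)
    (delta : ℝ) (hdelta : 0 < delta)
    (g : ℕ → Rn n → ℝ≥0∞) (hg : ∀ j, Measurable (g j)) :
    morreySeqNorm p u q
        (fun k x => ∑' j : ℕ,
          ENNReal.ofReal ((2 : ℝ) ^ (-(|(k : ℤ) - (j : ℤ)| : ℝ) * delta)) * g j x) ≤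
      ENNReal.ofReal
          (max (∑' j : ℤ, (2 : ℝ) ^ (-|(j : ℝ)| * delta))
            ((∑' j : ℤ, (2 : ℝ) ^ (-|(j : ℝ)| * delta *
                (essInf q (volume : Measure (Rn n))).toReal)) ^
              (1 / (essInf q (volume : Measure (Rn n))).toReal))) *
        morreySeqNorm p u q g :=
  statement6_general n p q u hq delta hdelta g
end
end

section
/- Let n ∈ ℕ, m > 0, 1 ≤ q < ∞, x_0 ∈ ℝ^n, r > 0 and i ∈ ℕ. Let (g_ν)_{ν∈ℕ_0} be non-negative measurable functions on ℝ^n each supported in the annulus B_{2^{i+1}r}(x_0) \ B_{2^i r}(x_0), and set η_{ν,m}(x) := 2^{νn}(1 + 2^ν|x|)^{−m}. Then there is a constant c > 0 depending only on m (not on x_0, r, i, q or the g_ν) such that for every x ∈ B_r(x_0): ( ∑_{ν=0}^∞ ((η_{ν,m} ∗ g_ν)(x))^q )^{1/q} ≤ c ∫_{B_{2^{i+1}r}(x_0)} ( ∑_{ν=0}^∞ 2^{νn}(1 + 2^ν 2^i r)^{−m} g_ν(y) ) dy. -/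
open MeasureTheory ENNReal Real
open scoped FourierTransform

noncomputable section

variable {n : ℕ}

/-! Only the annulus geometry matters: for `x ∈ B_r(x₀)` and `y` outside `B_{2^i r}(x₀)` we have
`2^i r ≤ 2|x - y|`, so on the support of `g_ν` the kernel `η_{ν,m}(x - y)` is at most `2^m` times
its value at radius `2^i r`. This bounds each convolution by an integral over `B_{2^{i+1} r}(x₀)`;
the `ℓ^q` norm is then dominated by the `ℓ^1` norm, and sum and integral are exchanged by
monotone convergence. -/

lemma ENNReal.sum_rpow_le_rpow_sum {ι : Type*} {q : ℝ} (hq : 1 ≤ q) (s : Finset ι)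
    (a : ι → ℝ≥0∞) : ∑ i ∈ s, a i ^ q ≤ (∑ i ∈ s, a i) ^ q := by
  classical
  induction s using Finset.induction with
  | empty => simp [ENNReal.zero_rpow_of_pos (zero_lt_one.trans_le hq)]
  | insert j t hj ih =>
    rw [Finset.sum_insert hj, Finset.sum_insert hj]
    calc a j ^ q + ∑ i ∈ t, a i ^ q ≤ a j ^ q + (∑ i ∈ t, a i) ^ q := by gcongr
      _ ≤ (a j + ∑ i ∈ t, a i) ^ q := ENNReal.add_rpow_le_rpow_add _ _ hq

lemma ENNReal.tsum_rpow_rpow_inv_le_tsum {ι : Type*} {q : ℝ} (hq : 1 ≤ q) (a : ι → ℝ≥0∞) :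
    (∑' i, a i ^ q) ^ (1 / q) ≤ ∑' i, a i := by
  have hq₀ : 0 < q := zero_lt_one.trans_le hq
  have h : ∑' i, a i ^ q ≤ (∑' i, a i) ^ q := by
    rw [ENNReal.tsum_eq_iSup_sum]
    exact iSup_le fun s => (ENNReal.sum_rpow_le_rpow_sum hq s a).trans
      (ENNReal.rpow_le_rpow (ENNReal.sum_le_tsum s) hq₀.le)
  calc (∑' i, a i ^ q) ^ (1 / q) ≤ ((∑' i, a i) ^ q) ^ (1 / q) := by gcongr
    _ = ∑' i, a i := by
      rw [← ENNReal.rpow_mul, mul_one_div_cancel hq₀.ne', ENNReal.rpow_one]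

lemma rpow_neg_le_two_rpow_mul_rpow_neg {m A B : ℝ} (hm : 0 ≤ m) (hA : 0 < A)
    (hAB : A ≤ 2 * B) : B ^ (-m) ≤ 2 ^ m * A ^ (-m) := by
  have hB : 0 < B := by linarith
  calc B ^ (-m) = 2 ^ m * (2 * B) ^ (-m) := by
        rw [Real.mul_rpow zero_le_two hB.le, Real.rpow_neg zero_le_two, ← mul_assoc,
          mul_inv_cancel₀ (Real.rpow_pos_of_pos two_pos m).ne', one_mul]
    _ ≤ 2 ^ m * A ^ (-m) := mul_le_mul_of_nonneg_left
      (Real.rpow_le_rpow_of_nonpos hA hAB (neg_nonpos.2 hm)) (by positivity)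

lemma le_two_mul_dist_of_mem_ball_of_notMem_ball {E : Type*} [PseudoMetricSpace E]
    {x y x₀ : E} {r R : ℝ} (hrR : 2 * r ≤ R) (hx : x ∈ Metric.ball x₀ r)
    (hy : y ∉ Metric.ball x₀ R) : R ≤ 2 * dist x y := by
  rw [Metric.mem_ball] at hx
  rw [Metric.mem_ball, not_lt] at hy
  linarith [dist_triangle y x x₀, dist_comm x y]

lemma etaK_le_two_rpow_mul {ν : ℕ} {m R : ℝ} {z : Rn n} (hm : 0 ≤ m) (hR : 0 ≤ R)
    (hRz : R ≤ 2 * ‖z‖) :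
    etaK ν m z ≤
      ENNReal.ofReal (2 ^ m) * ENNReal.ofReal (2 ^ (ν * n) * (1 + 2 ^ ν * R) ^ (-m)) := by
  rw [etaK, ← ENNReal.ofReal_mul (by positivity)]
  apply ENNReal.ofReal_le_ofReal
  have hAB : 1 + 2 ^ ν * R ≤ 2 * (1 + 2 ^ ν * ‖z‖) := by
    nlinarith [mul_le_mul_of_nonneg_left hRz (pow_nonneg zero_le_two ν : (0 : ℝ) ≤ 2 ^ ν)]
  calc (2 : ℝ) ^ (ν * n) * (1 + 2 ^ ν * ‖z‖) ^ (-m)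
      ≤ 2 ^ (ν * n) * (2 ^ m * (1 + 2 ^ ν * R) ^ (-m)) := by
        gcongr
        exact rpow_neg_le_two_rpow_mul_rpow_neg hm (by positivity) hAB
    _ = 2 ^ m * (2 ^ (ν * n) * (1 + 2 ^ ν * R) ^ (-m)) := by ring

lemma lconv_le_setLIntegral_const_mul {f g : Rn n → ℝ≥0∞} {S : Set (Rn n)} {x : Rn n}
    {C : ℝ≥0∞} (hS : MeasurableSet S) (hgS : Function.support g ⊆ S)
    (hf : ∀ y ∈ Function.support g, f (x - y) ≤ C) :
    lconv f g x ≤ ∫⁻ y in S, C * g y := by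
  rw [lconv, ← lintegral_indicator hS]
  refine lintegral_mono fun y => ?_
  by_cases hy : y ∈ Function.support g
  · rw [Set.indicator_of_mem (hgS hy)]
    exact mul_le_mul_left (hf y hy) _
  · simp [Function.notMem_support.1 hy]

theorem statement9_general (n : ℕ) (m : ℝ) (hm : 0 < m) :
    ∃ c : ℝ, 0 < c ∧
      ∀ (q : ℝ), 1 ≤ q → ∀ (x0 : Rn n) (r : ℝ), 0 < r → ∀ i : ℕ, 1 ≤ i →
        ∀ g : ℕ → Rn n → ℝ≥0∞, (∀ ν, Measurable (g ν)) →
          (∀ ν, Function.support (g ν) ⊆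
            Metric.ball x0 (2 ^ (i + 1) * r) \ Metric.ball x0 (2 ^ i * r)) →
          ∀ x ∈ Metric.ball x0 r,
            (∑' ν : ℕ, (lconv (etaK ν m) (g ν) x) ^ q) ^ (1 / q) ≤
              ENNReal.ofReal c *
                ∫⁻ y in Metric.ball x0 (2 ^ (i + 1) * r),
                  ∑' ν : ℕ,
                    ENNReal.ofReal ((2 : ℝ) ^ (ν * n) * (1 + 2 ^ ν * (2 ^ i * r)) ^ (-m)) *
                      g ν y := by
  refine ⟨2 ^ m, by positivity, fun q hq x0 r hr i hi g hg hsupp x hx => ?_⟩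
  set B := Metric.ball x0 (2 ^ (i + 1) * r)
  set K : ℕ → ℝ≥0∞ := fun ν =>
    ENNReal.ofReal ((2 : ℝ) ^ (ν * n) * (1 + 2 ^ ν * (2 ^ i * r)) ^ (-m))
  have h2r : 2 * r ≤ 2 ^ i * r := by
    gcongr
    exact le_self_pow₀ one_le_two (by omega)
  have hconv : ∀ ν, lconv (etaK ν m) (g ν) x ≤ ∫⁻ y in B, ENNReal.ofReal (2 ^ m) * K ν * g ν y :=
    fun ν => lconv_le_setLIntegral_const_mul measurableSet_ball
      (fun y hy => (hsupp ν hy).1) fun y hy => etaK_le_two_rpow_mul hm.le (by positivity)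
        (by simpa [dist_eq_norm] using
          le_two_mul_dist_of_mem_ball_of_notMem_ball h2r hx (hsupp ν hy).2)
  calc (∑' ν, lconv (etaK ν m) (g ν) x ^ q) ^ (1 / q)
      ≤ ∑' ν, lconv (etaK ν m) (g ν) x := ENNReal.tsum_rpow_rpow_inv_le_tsum hq _
    _ ≤ ∑' ν, ∫⁻ y in B, ENNReal.ofReal (2 ^ m) * K ν * g ν y := ENNReal.tsum_le_tsum hconv
    _ = ∫⁻ y in B, ENNReal.ofReal (2 ^ m) * ∑' ν, K ν * g ν y := by
      rw [← lintegral_tsum fun ν => ((hg ν).const_mul _).aemeasurable]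
      simp_rw [mul_assoc, ENNReal.tsum_mul_left]
    _ = ENNReal.ofReal (2 ^ m) * ∫⁻ y in B, ∑' ν, K ν * g ν y :=
      lintegral_const_mul' _ _ ENNReal.ofReal_ne_top

/-- size estimate for convolutions with functions supported in dyadic
annuli around `x₀`, evaluated on the ball `B_r(x₀)`. -/
theorem statement9 (n : ℕ) (m : ℝ) (hn : 0 < n) (hm : 0 < m) :
    ∃ c : ℝ, 0 < c ∧
      ∀ (q : ℝ), 1 ≤ q → ∀ (x0 : Rn n) (r : ℝ), 0 < r → ∀ i : ℕ, 1 ≤ i →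
        ∀ g : ℕ → Rn n → ℝ≥0∞, (∀ ν, Measurable (g ν)) →
          (∀ ν, Function.support (g ν) ⊆
            Metric.ball x0 (2 ^ (i + 1) * r) \ Metric.ball x0 (2 ^ i * r)) →
          ∀ x ∈ Metric.ball x0 r,
            (∑' ν : ℕ, (lconv (etaK ν m) (g ν) x) ^ q) ^ (1 / q) ≤
              ENNReal.ofReal c *
                ∫⁻ y in Metric.ball x0 (2 ^ (i + 1) * r),
                  ∑' ν : ℕ,
                    ENNReal.ofReal ((2 : ℝ) ^ (ν * n) * (1 + 2 ^ ν * (2 ^ i * r)) ^ (-m)) *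
                      g ν y :=
  statement9_general n m hm
end
end

section
/- Let ε > 0 and k ∈ (1,2], and let φ_0, φ_1 ∈ S(ℝ^n) be Schwartz functions satisfying |φ_0(x)| > 0 on {|x| ≤ kε} and |φ_1(x)| > 0 on {ε ≤ |x| ≤ 2kε}. Set φ_j(x) := φ_1(2^{−j+1}x) for j ≥ 2. Then there exist Schwartz functions λ_j ∈ S(ℝ^n), j ∈ ℕ_0, such that: supp λ_0 ⊂ {x : |x| ≤ kε}; supp λ_1 ⊂ {x : ε ≤ |x| ≤ 2kε}; λ_j(x) = λ_1(2^{−j+1}x) for all x ∈ ℝ^n and j ∈ ℕ; and ∑_{j=0}^∞ λ_j(x) φ_j(x) = 1 for all x ∈ ℝ^n. -/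
open MeasureTheory ENNReal Real
open scoped FourierTransform

noncomputable section

variable {n : ℕ}

/-- Tempered distributions on `ℝ^n`. -/
abbrev TemperedDist (n : ℕ) : Type := SchwartzMap (Rn n) ℂ →L[ℂ] ℂ

lemma hasTemperateGrowth_reflectTranslate (y : Rn n) :
    Function.HasTemperateGrowth (fun z : Rn n => y - z) := by
  have hd : Differentiable ℝ (fun z : Rn n => y - z) :=
    (differentiable_const y).sub differentiable_id
  have hfd : fderiv ℝ (fun z : Rn n => y - z)
      = fun _ => -(ContinuousLinearMap.id ℝ (Rn n)) := by
    funext z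
    rw [fderiv_const_sub, fderiv_id']
  refine Function.HasTemperateGrowth.of_fderiv (k := 1) (C := ‖y‖ + 1) ?_ hd ?_
  · rw [hfd]; exact .const _
  · intro x
    calc ‖y - x‖ ≤ ‖y‖ + ‖x‖ := norm_sub_le _ _
      _ ≤ (‖y‖ + 1) * (1 + ‖x‖) ^ 1 := by
          have h1 := norm_nonneg x
          have h2 := norm_nonneg y
          nlinarith

/-- The map `z ↦ Ψ (y - z)`, as a Schwartz function. -/
def reflectTranslate (y : Rn n) (Ψ : SchwartzMap (Rn n) ℂ) : SchwartzMap (Rn n) ℂ :=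
  SchwartzMap.compCLMOfAntilipschitz (𝕜 := ℂ) (K := 1)
    (hasTemperateGrowth_reflectTranslate y)
    ((Isometry.of_dist_eq (fun z z' => dist_sub_left y z z')).antilipschitz) Ψ

@[simp] lemma reflectTranslate_apply (y : Rn n) (Ψ : SchwartzMap (Rn n) ℂ) (z : Rn n) :
    reflectTranslate y Ψ z = Ψ (y - z) := rfl

/-- The convolution `(Ψ ∗ f)(y) = f(Ψ(y - ·))` of a Schwartz function `Ψ` with a tempered
distribution `f`. -/
def distConv (Ψ : SchwartzMap (Rn n) ℂ) (f : TemperedDist n) (y : Rn n) : ℂ :=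
  f (reflectTranslate y Ψ)

/-- The Peetre maximal function at level `j`, with parameter `a`, of a function `F`
(to be applied with `F = Ψ_j ∗ f`):  `sup_y ‖F y‖ / (1 + |2^j (y - x)|^a)`. -/
def peetreMax (a : ℝ) (j : ℕ) (F : Rn n → ℂ) (x : Rn n) : ℝ≥0∞ :=
  ⨆ y : Rn n, (‖F y‖₊ : ℝ≥0∞) / ENNReal.ofReal (1 + ((2 : ℝ) ^ j * ‖y - x‖) ^ a)

/-- Admissible weight sequences from the class `W^α_{α₁,α₂}`, with constant `C` in
condition (i). -/
def AdmissibleWeights (al al1 al2 C : ℝ) (w : ℕ → Rn n → ℝ) : Prop :=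
  (∀ j, Measurable (w j)) ∧
  (∀ (j : ℕ) (x y : Rn n), 0 < w j x ∧ w j x ≤ C * w j y * (1 + 2 ^ j * ‖x - y‖) ^ al) ∧
  (∀ (j : ℕ) (x : Rn n), 2 ^ al1 * w j x ≤ w (j + 1) x ∧ w (j + 1) x ≤ 2 ^ al2 * w j x)

/-- An admissible pair `(φ̌, Φ̌)`, described through the generating functions `φ, Φ`. -/
def AdmissiblePair (phi Phi : SchwartzMap (Rn n) ℂ) : Prop :=
  (Function.support ⇑phi ⊆ {x : Rn n | 1 / 2 ≤ ‖x‖ ∧ ‖x‖ ≤ 2}) ∧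
  (Function.support ⇑Phi ⊆ {x : Rn n | ‖x‖ ≤ 2}) ∧
  ∃ c > 0, (∀ x : Rn n, 3 / 5 ≤ ‖x‖ → ‖x‖ ≤ 5 / 3 → c ≤ ‖phi x‖) ∧
    (∀ x : Rn n, ‖x‖ ≤ 5 / 3 → c ≤ ‖Phi x‖)


/-!
Take a smooth bump `Θ` with `Θ = 1` on `‖x‖ ≤ ε` and `Θ = 0` on `‖x‖ ≥ kε`, and put
`λ₀ = Θ / φ₀` and `λ₁ = (Θ(·/2) - Θ) / φ₁`: the numerators vanish near the zeros of the
denominators, so both quotients are smooth and compactly supported, hence Schwartz. With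
`λⱼ = λ₁(2^{1-j} ·)` the products `λⱼ φⱼ` are `Θ`, `Θ(·/2) - Θ`, `Θ(·/4) - Θ(·/2)`, …, whose
partial sums telescope to `Θ(2^{-N} x)`, which equals `1` once `2^{-N} ‖x‖ ≤ ε`.
-/

open Filter Topology Function

theorem ContDiff.div_of_ne_zero_on_tsupport {𝕜 𝕜' E : Type*} [NontriviallyNormedField 𝕜]
    [NormedField 𝕜'] [NormedAlgebra 𝕜 𝕜'] [NormedAddCommGroup E] [NormedSpace 𝕜 E]
    {f g : E → 𝕜'} {m : WithTop ℕ∞} (hf : ContDiff 𝕜 m f) (hg : ContDiff 𝕜 m g)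
    (hfg : ∀ x ∈ tsupport f, g x ≠ 0) : ContDiff 𝕜 m fun x => f x / g x := by
  refine contDiff_iff_contDiffAt.2 fun x => ?_
  by_cases hx : g x = 0
  · have hf0 : f =ᶠ[𝓝 x] 0 := notMem_tsupport_iff_eventuallyEq.1 fun h => hfg x h hx
    refine contDiffAt_const (c := (0 : 𝕜')).congr_of_eventuallyEq ?_
    filter_upwards [hf0] with y hy
    simp [hy]
  · simpa only [div_eq_mul_inv] using hf.contDiffAt.mul (hg.contDiffAt.fun_inv hx)

open scoped ContDiff in
theorem SchwartzMap.exists_mul_eq_of_ne_zero_on_tsupport {𝕜 E : Type*} [RCLike 𝕜]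
    [NormedAddCommGroup E] [NormedSpace ℝ E] {ψ : E → ℝ} (hψ : ContDiff ℝ ∞ ψ)
    (hψc : HasCompactSupport ψ) (φ : SchwartzMap E 𝕜) (hφ : ∀ x ∈ tsupport ψ, φ x ≠ 0) :
    ∃ l : SchwartzMap E 𝕜, (∀ x, l x * φ x = ψ x) ∧ support l ⊆ support ψ := by
  have hsupp : support (fun x => (ψ x : 𝕜) / φ x) ⊆ support ψ := fun x hx => by
    rw [mem_support] at hx ⊢
    contrapose! hx
    simp [hx]
  have hsmooth : ContDiff ℝ ∞ fun x => (ψ x : 𝕜) / φ x := by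
    have hψ' : ContDiff ℝ ∞ fun x => (ψ x : 𝕜) := (RCLike.ofRealCLM (K := 𝕜)).contDiff.comp hψ
    refine ContDiff.div_of_ne_zero_on_tsupport hψ'
      (φ.smooth ⊤) fun x hx => hφ x (closure_mono ?_ hx)
    exact fun y hy => by simpa using hy
  refine ⟨(hψc.mono hsupp).toSchwartzMap hsmooth, fun x => ?_, hsupp⟩
  by_cases hx : φ x = 0
  · simp [hx, image_eq_zero_of_notMem_tsupport fun h => hφ x h hx]
  · exact div_mul_cancel₀ _ hx

theorem hasSum_of_telescoping_of_eventually_eq {G : Type*} [AddCommGroup G] [TopologicalSpace G]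
    {a t : ℕ → G} {c : G} (ht₀ : t 0 = a 0) (ht : ∀ m, t (m + 1) = a (m + 1) - a m)
    (ha : ∀ᶠ m in atTop, a m = c) : HasSum t c := by
  obtain ⟨N, hN⟩ := eventually_atTop.1 ha
  have hpartial : ∀ M, ∑ j ∈ Finset.range (M + 1), t j = a M := fun M => by
    simp only [Finset.sum_range_succ', ht, Finset.sum_range_sub, ht₀, sub_add_cancel]
  have hzero : ∀ j ∉ Finset.range (N + 1), t j = 0 := by
    rintro (_ | m) hm
    · simp at hm
    · rw [Finset.mem_range, not_lt] at hm
      rw [ht, hN _ (by omega), hN _ (by omega), sub_self]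
  simpa [hpartial, hN N le_rfl] using hasSum_sum_of_ne_finset_zero hzero

namespace ContDiffBump

variable {E : Type*} [NormedAddCommGroup E] [NormedSpace ℝ E] [HasContDiffBump E]
  (f : ContDiffBump (0 : E))

theorem support_comp_half_sub_subset :
    support (fun y => f ((2 : ℝ)⁻¹ • y) - f y) ⊆ {y | f.rIn ≤ ‖y‖ ∧ ‖y‖ ≤ 2 * f.rOut} := by
  intro y hy
  have hhalf : ‖(2 : ℝ)⁻¹ • y‖ = ‖y‖ / 2 := by
    rw [norm_smul, Real.norm_of_nonneg (by norm_num)]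
    ring
  by_contra hy'
  rcases not_and_or.1 hy' with hlt | hgt
  · have h₁ : ∀ z : E, ‖z‖ ≤ f.rIn → f z = 1 := fun z hz =>
      f.one_of_mem_closedBall (by simpa using hz)
    have := norm_nonneg y
    exact hy (by dsimp only; rw [h₁ y (by linarith), h₁ _ (by rw [hhalf]; linarith), sub_self])
  · have h₀ : ∀ z : E, f.rOut ≤ ‖z‖ → f z = 0 := fun z hz =>
      f.zero_of_le_dist (by simpa using hz)
    have := f.rOut_pos
    exact hy (by dsimp only; rw [h₀ y (by linarith), h₀ _ (by rw [hhalf]; linarith), sub_self])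

theorem tsupport_comp_half_sub_subset :
    tsupport (fun y => f ((2 : ℝ)⁻¹ • y) - f y) ⊆ {y | f.rIn ≤ ‖y‖ ∧ ‖y‖ ≤ 2 * f.rOut} :=
  closure_minimal f.support_comp_half_sub_subset <|
    (isClosed_le continuous_const continuous_norm).inter
      (isClosed_le continuous_norm continuous_const)

open scoped ContDiff in
theorem contDiff_comp_half_sub : ContDiff ℝ ∞ fun y => f ((2 : ℝ)⁻¹ • y) - f y :=
  (f.contDiff.comp (contDiff_const_smul _)).sub f.contDiff

theorem hasCompactSupport_comp_half_sub [FiniteDimensional ℝ E] :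
    HasCompactSupport fun y => f ((2 : ℝ)⁻¹ • y) - f y :=
  (isCompact_closedBall (0 : E) (2 * f.rOut)).of_isClosed_subset (isClosed_tsupport _)
    fun y hy => by simpa using (f.tsupport_comp_half_sub_subset hy).2

theorem eventually_apply_inv_two_pow_smul_eq_one (x : E) :
    ∀ᶠ m : ℕ in atTop, f ((2⁻¹ : ℝ) ^ m • x) = 1 := by
  have hlim : Tendsto (fun m : ℕ => (2⁻¹ : ℝ) ^ m • x) atTop (𝓝 0) := by
    simpa using (_root_.tendsto_pow_atTop_nhds_zero_of_lt_one (r := (2⁻¹ : ℝ)) (by norm_num)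
      (by norm_num)).smul_const x
  filter_upwards [hlim (Metric.closedBall_mem_nhds 0 f.rIn_pos)] with m hm
  exact f.one_of_mem_closedBall hm

end ContDiffBump

theorem statement11_general (n : ℕ) (eps k : ℝ) (heps : 0 < eps) (hk1 : 1 < k)
    (phi0 phi1 : SchwartzMap (Rn n) ℂ)
    (h0 : ∀ x : Rn n, ‖x‖ ≤ k * eps → 0 < ‖phi0 x‖)
    (h1 : ∀ x : Rn n, eps ≤ ‖x‖ → ‖x‖ ≤ 2 * k * eps → 0 < ‖phi1 x‖) :
    ∃ lam : ℕ → SchwartzMap (Rn n) ℂ,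
      (Function.support ⇑(lam 0) ⊆ {x : Rn n | ‖x‖ ≤ k * eps}) ∧
      (Function.support ⇑(lam 1) ⊆ {x : Rn n | eps ≤ ‖x‖ ∧ ‖x‖ ≤ 2 * k * eps}) ∧
      (∀ j : ℕ, 1 ≤ j → ∀ x : Rn n, lam j x = lam 1 ((2 : ℝ) ^ (-(j : ℝ) + 1) • x)) ∧
      (∀ x : Rn n,
        ∑' j : ℕ, lam j x *
          (if j = 0 then phi0 x else phi1 ((2 : ℝ) ^ (-(j : ℝ) + 1) • x)) = 1) := by
  let Θ : ContDiffBump (0 : Rn n) := ⟨eps, k * eps, heps, by nlinarith⟩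
  let ψ : Rn n → ℝ := fun y => Θ ((2 : ℝ)⁻¹ • y) - Θ y
  have hψ_tsupp : tsupport ψ ⊆ {y | eps ≤ ‖y‖ ∧ ‖y‖ ≤ 2 * k * eps} := by
    simpa only [mul_assoc] using Θ.tsupport_comp_half_sub_subset
  obtain ⟨Λ₀, hΛ₀, hΛ₀_supp⟩ := SchwartzMap.exists_mul_eq_of_ne_zero_on_tsupport Θ.contDiff
    Θ.hasCompactSupport phi0 fun x hx =>
      norm_pos_iff.1 (h0 x (by simpa [Θ.tsupport_eq] using hx))
  obtain ⟨Λ₁, hΛ₁, hΛ₁_supp⟩ := SchwartzMap.exists_mul_eq_of_ne_zero_on_tsupport (ψ := ψ)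
    Θ.contDiff_comp_half_sub Θ.hasCompactSupport_comp_half_sub phi1 fun x hx =>
      norm_pos_iff.1 (h1 x (hψ_tsupp hx).1 (hψ_tsupp hx).2)
  let dilation (j : ℕ) : Rn n ≃L[ℝ] Rn n :=
    ContinuousLinearEquiv.smulLeft (Units.mk0 ((2 : ℝ) ^ (-(j : ℝ) + 1)) (by positivity))
  have hdilation (j : ℕ) (y : Rn n) : dilation j y = (2 : ℝ) ^ (-(j : ℝ) + 1) • y := rfl
  refine ⟨fun j => if j = 0 then Λ₀ else
    SchwartzMap.compCLMOfContinuousLinearEquiv ℂ (dilation j) Λ₁, ?_, ?_, ?_, fun x => ?_⟩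
  · intro x hx
    have hx' : x ∈ Metric.ball 0 Θ.rOut := Θ.support_eq ▸ hΛ₀_supp hx
    exact (mem_ball_zero_iff.1 hx').le
  · intro x hx
    exact hψ_tsupp (subset_tsupport ψ (hΛ₁_supp (by simpa [hdilation] using hx)))
  · intro j hj x
    simp [hdilation, Nat.one_le_iff_ne_zero.1 hj]
  · refine (hasSum_of_telescoping_of_eventually_eq (a := fun m => (Θ ((2⁻¹ : ℝ) ^ m • x) : ℂ))
      ?_ ?_ ?_).tsum_eq
    · simp [hΛ₀]
    · intro m
      simp [hdilation, hΛ₁, ψ, smul_smul, pow_succ']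
    · filter_upwards [Θ.eventually_apply_inv_two_pow_smul_eq_one x] with m hm
      exact_mod_cast hm

/-- construction of the resolution functions `λ_j` adapted to `φ_0, φ_1`. -/
theorem statement11 (n : ℕ) (eps k : ℝ) (heps : 0 < eps) (hk1 : 1 < k) (hk2 : k ≤ 2)
    (phi0 phi1 : SchwartzMap (Rn n) ℂ)
    (h0 : ∀ x : Rn n, ‖x‖ ≤ k * eps → 0 < ‖phi0 x‖)
    (h1 : ∀ x : Rn n, eps ≤ ‖x‖ → ‖x‖ ≤ 2 * k * eps → 0 < ‖phi1 x‖) :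
    ∃ lam : ℕ → SchwartzMap (Rn n) ℂ,
      (Function.support ⇑(lam 0) ⊆ {x : Rn n | ‖x‖ ≤ k * eps}) ∧
      (Function.support ⇑(lam 1) ⊆ {x : Rn n | eps ≤ ‖x‖ ∧ ‖x‖ ≤ 2 * k * eps}) ∧
      (∀ j : ℕ, 1 ≤ j → ∀ x : Rn n, lam j x = lam 1 ((2 : ℝ) ^ (-(j : ℝ) + 1) • x)) ∧
      (∀ x : Rn n,
        ∑' j : ℕ, lam j x *
          (if j = 0 then phi0 x else phi1 ((2 : ℝ) ^ (-(j : ℝ) + 1) • x)) = 1) :=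
  statement11_general n eps k heps hk1 phi0 phi1 h0 h1
end
end
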